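/- Let p be an odd prime and U the F_p-vector space with basis u₁,…,u₆. Let K² ⊆ Λ²U^∨ be the subspace spanned by u₁^∨∧u₂^∨ − u₄^∨∧u₅^∨, u₂^∨∧u₃^∨ − u₅^∨∧u₆^∨, u₁^∨∧u₄^∨, u₂^∨∧u₅^∨, u₃^∨∧u₆^∨, u₄^∨∧u₆^∨. Then the orthogonal complement (K²)^⊥ ⊆ Λ²U is spanned by its decomposable elements (elements of the form u∧v with u,v ∈ U); equivalently, K²_max = K², where K²_max is the orthogonal of the subgroup of (K²)^⊥ generated by decomposable bivectors. -/

import Mathlib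

/-!
Write `e₀, …, e₅` for the basis of `U` and `w_ab = e_a ∧ e_b`. Every `x ∈ Λ²U` is
`∑_{a<b} x_ab w_ab` with `x_ab = (e_a^∨ ∧ e_b^∨)(x)`, and every alternating 2-form is
`A = ∑_{a<b} A(e_a, e_b) e_a^∨ ∧ e_b^∨`. The generators of `K²` say exactly that
`x₀₃ = x₁₄ = x₂₅ = x₃₅ = 0`, `x₃₄ = x₀₁` and `x₄₅ = x₁₂`, so `(K²)^⊥` is spanned by the seven basis
bivectors `w_ab` it contains together with `w₀₁ + w₃₄` and `w₁₂ + w₄₅`. These two are decomposable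
up to such basis bivectors: `w₀₁ + w₃₄ = (e₀ + e₃) ∧ (e₁ + e₄) + w₁₃ − w₀₄` and
`w₁₂ + w₄₅ = (e₁ + e₄) ∧ (e₂ + e₅) + w₂₄ − w₁₅`. Dually, a 2-form vanishing on these nine
bivectors has `A(e_a, e_b) = 0` on the seven pairs, `A(e₃, e₄) = −A(e₀, e₁)` and
`A(e₄, e₅) = −A(e₁, e₂)`, which writes it as a combination of the generators of `K²`.
-/

open ExteriorAlgebra

/-- The alternating `k`-form `f₁ ∧ ⋯ ∧ f_k` determined by a family of linear forms,
`(v₁,…,v_k) ↦ ∑_{σ} ε(σ) ∏ f_i(v_{σ(i)})`. -/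
noncomputable def altOfFamily {R U : Type*} [CommRing R] [AddCommGroup U] [Module R U]
    {k : ℕ} (f : Fin k → Module.Dual R U) : U [⋀^Fin k]→ₗ[R] R :=
  MultilinearMap.alternatization ((MultilinearMap.mkPiAlgebra R (Fin k) R).compLinearMap f)

/-- The linear functional on the exterior algebra determined by an alternating `k`-form,
vanishing in all other degrees. -/
noncomputable def dualPiece {R U : Type*} [CommRing R] [AddCommGroup U] [Module R U]
    (k : ℕ) (A : U [⋀^Fin k]→ₗ[R] R) : Module.Dual R (ExteriorAlgebra R U) :=
  ExteriorAlgebra.liftAlternating (fun i => if h : i = k then h.symm ▸ A else 0)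

/-- The functional `u_a^∨ ∧ u_b^∨` on the exterior algebra of `U = (𝔽_p)⁶`. -/
noncomputable def dw2 (p : ℕ) (a b : Fin 6) :
    Module.Dual (ZMod p) (ExteriorAlgebra (ZMod p) (Fin 6 → ZMod p)) :=
  dualPiece 2 (altOfFamily ![LinearMap.proj a, LinearMap.proj b])

lemma AlternatingMap.sum_apply {R M N ι α : Type*} [Semiring R] [AddCommMonoid M] [Module R M]
    [AddCommMonoid N] [Module R N] (s : Finset α) (f : α → M [⋀^ι]→ₗ[R] N) (v : ι → M) :
    (∑ a ∈ s, f a) v = ∑ a ∈ s, f a v :=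
  map_sum ({ toFun := fun B => B v, map_zero' := rfl, map_add' := fun _ _ => rfl } :
    M [⋀^ι]→ₗ[R] N →+ N) f s

section Bivectors

variable {R M : Type*} [CommRing R] [AddCommGroup M] [Module R M]

noncomputable def dualPieceₗ (k : ℕ) :
    (M [⋀^Fin k]→ₗ[R] R) →ₗ[R] Module.Dual R (ExteriorAlgebra R M) :=
  liftAlternating ∘ₗ LinearMap.single R (fun i => M [⋀^Fin i]→ₗ[R] R) k

lemma dualPieceₗ_apply (k : ℕ) (A : M [⋀^Fin k]→ₗ[R] R) :
    dualPieceₗ k A = dualPiece k A :=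
  rfl

lemma span_dualPiece_eq_range (k : ℕ) :
    Submodule.span R {φ | ∃ A : M [⋀^Fin k]→ₗ[R] R, φ = dualPiece k A} =
      LinearMap.range (dualPieceₗ (R := R) (M := M) k) := by
  apply le_antisymm
  · rw [Submodule.span_le]
    rintro _ ⟨A, rfl⟩
    exact ⟨A, dualPieceₗ_apply k A⟩
  · rintro _ ⟨A, rfl⟩
    exact Submodule.subset_span ⟨A, dualPieceₗ_apply k A⟩

lemma dualPiece_two_ι_mul_ι (A : M [⋀^Fin 2]→ₗ[R] R) (u v : M) :
    dualPiece 2 A (ι R u * ι R v) = A ![u, v] := by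
  rw [dualPiece, liftAlternating_ι_mul, liftAlternating_ι]
  simp [AlternatingMap.curryLeft_apply_apply]

lemma altOfFamily_two_apply (f g : Module.Dual R M) (u v : M) :
    altOfFamily ![f, g] ![u, v] = f u * g v - f v * g u := by
  have h : (Finset.univ : Finset (Equiv.Perm (Fin 2))) = {1, Equiv.swap 0 1} := by decide
  rw [altOfFamily, MultilinearMap.alternatization_apply, h, Finset.sum_pair (by decide)]
  simp [sub_eq_add_neg]

lemma alternatingMap_two_swap {N : Type*} [AddCommGroup N] [Module R N]
    (A : M [⋀^Fin 2]→ₗ[R] N) (u v : M) : A ![v, u] = -A ![u, v] := by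
  rw [← A.map_swap ![u, v] (i := 0) (j := 1) (by decide)]
  congr 1
  ext i
  fin_cases i <;> rfl

lemma ι_mul_ι_mem_exteriorPower_two (u v : M) : ι R u * ι R v ∈ ⋀[R]^2 M := by
  rw [ExteriorAlgebra.exteriorPower, pow_two]
  exact Submodule.mul_mem_mul (LinearMap.mem_range_self _ u) (LinearMap.mem_range_self _ v)

end Bivectors

section Coordinates

variable {I : Type*} (R : Type*) [CommRing R]

noncomputable def dualWedge (a b : I) : Module.Dual R (ExteriorAlgebra R (I → R)) :=
  dualPiece 2 (altOfFamily ![LinearMap.proj a, LinearMap.proj b])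

noncomputable def basisBivector [DecidableEq I] (a b : I) : ExteriorAlgebra R (I → R) :=
  ι R (Pi.single a 1) * ι R (Pi.single b 1)

variable {R}

lemma dualWedge_ι_mul_ι (a b : I) (u v : I → R) :
    dualWedge R a b (ι R u * ι R v) = u a * v b - u b * v a := by
  rw [dualWedge, dualPiece_two_ι_mul_ι, altOfFamily_two_apply]
  simp only [LinearMap.proj_apply]
  ring

lemma basisBivector_swap [DecidableEq I] (a b : I) :
    basisBivector R b a = -basisBivector R a b :=
  eq_neg_of_add_eq_zero_left (ι_add_mul_swap _ _)

lemma basisBivector_add_basisBivector [DecidableEq I] (a b c d : I) :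
    basisBivector R a b + basisBivector R c d =
      ι R (Pi.single a 1 + Pi.single c 1) * ι R (Pi.single b 1 + Pi.single d 1) +
        basisBivector R b c - basisBivector R a d := by
  simp only [map_add, add_mul, mul_add]
  rw [← basisBivector, ← basisBivector, ← basisBivector, ← basisBivector, basisBivector_swap c b]
  abel

lemma ι_eq_sum [Fintype I] [DecidableEq I] (u : I → R) :
    ι R u = ∑ a, u a • ι R (Pi.single a 1) := by
  simp_rw [← map_smul, ← map_sum, ← Pi.single_smul, smul_eq_mul, mul_one]
  congr 1
  exact (Finset.univ_sum_single u).symm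

variable [LinearOrder I]

variable (I) in
def ltPairs [Fintype I] : Finset (I × I) :=
  Finset.univ.filter fun q => q.1 < q.2

variable [Fintype I]

lemma mem_ltPairs {q : I × I} : q ∈ ltPairs I ↔ q.1 < q.2 := by
  simp [ltPairs]

lemma sum_eq_sum_ltPairs_add_swap {M : Type*} [AddCommMonoid M] (f : I × I → M)
    (hf : ∀ a, f (a, a) = 0) : ∑ q, f q = ∑ q ∈ ltPairs I, (f q + f q.swap) := by
  have hsplit : ∀ q : I × I,
      f q = (if q.1 < q.2 then f q else 0) + (if q.2 < q.1 then f q else 0) := by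
    rintro ⟨a, b⟩
    rcases lt_trichotomy a b with h | rfl | h
    · simp [h, h.not_gt]
    · simp [hf]
    · simp [h, h.not_gt]
  rw [Finset.sum_congr rfl (fun q _ => hsplit q), Finset.sum_add_distrib,
    ← (Equiv.prodComm I I).sum_comp (fun q => if q.2 < q.1 then f q else 0)]
  simp [ltPairs, Finset.sum_filter, Finset.sum_add_distrib]
  rfl

lemma ι_mul_ι_eq_sum (u v : I → R) :
    ι R u * ι R v =
      ∑ q ∈ ltPairs I, (u q.1 * v q.2 - u q.2 * v q.1) • basisBivector R q.1 q.2 := by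
  rw [ι_eq_sum u, ι_eq_sum v, Finset.sum_mul_sum, ← Finset.sum_product',
    Finset.univ_product_univ, sum_eq_sum_ltPairs_add_swap]
  · refine Finset.sum_congr rfl fun q _ => ?_
    simp only [smul_mul_smul_comm, Prod.fst_swap, Prod.snd_swap]
    rw [← basisBivector, ← basisBivector, basisBivector_swap]
    module
  · intro a
    simp

lemma eq_sum_dualWedge_smul_basisBivector {x : ExteriorAlgebra R (I → R)}
    (hx : x ∈ ⋀[R]^2 (I → R)) :
    x = ∑ q ∈ ltPairs I, dualWedge R q.1 q.2 x • basisBivector R q.1 q.2 := by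
  rw [ExteriorAlgebra.exteriorPower, pow_two] at hx
  induction hx using Submodule.mul_induction_on' with
  | mem_mul_mem _ hm _ hn =>
    obtain ⟨u, rfl⟩ := hm
    obtain ⟨v, rfl⟩ := hn
    simp only [dualWedge_ι_mul_ι]
    exact ι_mul_ι_eq_sum u v
  | add x _ y _ hx hy =>
    conv_lhs => rw [hx, hy]
    simp only [map_add, add_smul, Finset.sum_add_distrib]

lemma alternatingMap_two_eq_sum (A : (I → R) [⋀^Fin 2]→ₗ[R] R) :
    A = ∑ q ∈ ltPairs I, A ![Pi.single q.1 1, Pi.single q.2 1] •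
      altOfFamily ![LinearMap.proj q.1, LinearMap.proj q.2] := by
  refine (Pi.basisFun R I).ext_alternating fun v hv => ?_
  have hab : v 0 ≠ v 1 := fun h => absurd (hv h) (by decide)
  have hvec :
      (fun i => Pi.basisFun R I (v i)) = ![Pi.single (v 0) 1, Pi.single (v 1) 1] := by
    funext i
    fin_cases i <;> simp
  rw [hvec]
  generalize v 0 = a, v 1 = b at hab
  simp only [AlternatingMap.sum_apply, AlternatingMap.smul_apply, altOfFamily_two_apply,
    LinearMap.proj_apply, Pi.single_apply, smul_eq_mul]
  rcases hab.lt_or_gt with h | h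
  · rw [Finset.sum_eq_single (a, b)]
    · simp [hab, hab.symm]
    · rintro ⟨c, d⟩ hcd hne
      rw [mem_ltPairs] at hcd
      split_ifs <;> simp_all [lt_asymm]
    · simp [mem_ltPairs, h]
  · rw [Finset.sum_eq_single (b, a)]
    · simpa [hab, hab.symm] using alternatingMap_two_swap A _ _
    · rintro ⟨c, d⟩ hcd hne
      rw [mem_ltPairs] at hcd
      split_ifs <;> simp_all [lt_asymm]
    · simp [mem_ltPairs, h]

lemma dualPiece_two_eq_sum (A : (I → R) [⋀^Fin 2]→ₗ[R] R) :
    dualPiece 2 A =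
      ∑ q ∈ ltPairs I, A ![Pi.single q.1 1, Pi.single q.2 1] • dualWedge R q.1 q.2 := by
  rw [← dualPieceₗ_apply]
  conv_lhs => rw [alternatingMap_two_eq_sum A]
  simp only [map_sum, map_smul, dualPieceₗ_apply, dualWedge]

end Coordinates

section K2

variable (R : Type*) [CommRing R]

noncomputable def k2Generators : Set (Module.Dual R (ExteriorAlgebra R (Fin 6 → R))) :=
  {dualWedge R 0 1 - dualWedge R 3 4, dualWedge R 1 2 - dualWedge R 4 5,
    dualWedge R 0 3, dualWedge R 1 4, dualWedge R 2 5, dualWedge R 3 5}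

noncomputable def k2Perp : Submodule R (ExteriorAlgebra R (Fin 6 → R)) :=
  ⋀[R]^2 (Fin 6 → R) ⊓ (Submodule.span R (k2Generators R)).dualCoannihilator

noncomputable def k2PerpDecomposableSpan : Submodule R (ExteriorAlgebra R (Fin 6 → R)) :=
  Submodule.span R {x | x ∈ k2Perp R ∧ ∃ u v : Fin 6 → R, x = ι R u * ι R v}

variable {R}

lemma sum_ltPairs_fin_six {M : Type*} [AddCommMonoid M] (f : Fin 6 × Fin 6 → M) :
    ∑ q ∈ ltPairs (Fin 6), f q = f (0, 1) + f (0, 2) + f (0, 3) + f (0, 4) + f (0, 5) +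
      f (1, 2) + f (1, 3) + f (1, 4) + f (1, 5) + f (2, 3) + f (2, 4) + f (2, 5) +
      f (3, 4) + f (3, 5) + f (4, 5) := by
  simp [ltPairs, Finset.sum_filter, Fintype.sum_prod_type, Fin.sum_univ_six, add_assoc]

lemma mem_k2Perp {x : ExteriorAlgebra R (Fin 6 → R)} :
    x ∈ k2Perp R ↔ x ∈ ⋀[R]^2 (Fin 6 → R) ∧ ∀ φ ∈ k2Generators R, φ x = 0 := by
  rw [k2Perp, Submodule.mem_inf,
    ← SetLike.mem_coe (x := x) (p := Submodule.dualCoannihilator _),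
    Submodule.coe_dualCoannihilator_span]
  rfl

lemma ι_mul_ι_mem_k2PerpDecomposableSpan {u v : Fin 6 → R}
    (h : ∀ φ ∈ k2Generators R, φ (ι R u * ι R v) = 0) :
    ι R u * ι R v ∈ k2PerpDecomposableSpan R :=
  Submodule.subset_span ⟨mem_k2Perp.2 ⟨ι_mul_ι_mem_exteriorPower_two u v, h⟩, u, v, rfl⟩

def k2PerpPairs : Finset (Fin 6 × Fin 6) :=
  {(0, 2), (0, 4), (0, 5), (1, 3), (1, 5), (2, 3), (2, 4)}

lemma basisBivector_mem_k2PerpDecomposableSpan {a b : Fin 6} (h : (a, b) ∈ k2PerpPairs) :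
    basisBivector R a b ∈ k2PerpDecomposableSpan R := by
  apply ι_mul_ι_mem_k2PerpDecomposableSpan
  simp only [k2PerpPairs, Finset.mem_insert, Finset.mem_singleton, Prod.mk.injEq] at h
  rcases h with ⟨rfl, rfl⟩ | ⟨rfl, rfl⟩ | ⟨rfl, rfl⟩ | ⟨rfl, rfl⟩ | ⟨rfl, rfl⟩ | ⟨rfl, rfl⟩ |
    ⟨rfl, rfl⟩ <;> simp [k2Generators, dualWedge_ι_mul_ι]

lemma basisBivector_add_mem_k2PerpDecomposableSpan {a : Fin 6} (ha : a = 0 ∨ a = 1) :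
    basisBivector R a (a + 1) + basisBivector R (a + 3) (a + 4) ∈
      k2PerpDecomposableSpan R := by
  rw [basisBivector_add_basisBivector]
  refine sub_mem (add_mem (ι_mul_ι_mem_k2PerpDecomposableSpan ?_)
    (basisBivector_mem_k2PerpDecomposableSpan ?_)) (basisBivector_mem_k2PerpDecomposableSpan ?_)
  all_goals rcases ha with rfl | rfl
  all_goals simp [k2Generators, k2PerpPairs, dualWedge_ι_mul_ι, -map_add]

lemma k2PerpDecomposableSpan_eq_k2Perp : k2PerpDecomposableSpan R = k2Perp R := by
  refine le_antisymm (Submodule.span_le.2 fun x hx => hx.1) fun x hx => ?_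
  obtain ⟨hx2, hxK⟩ := mem_k2Perp.1 hx
  simp only [k2Generators, Set.mem_insert_iff, Set.mem_singleton_iff, forall_eq_or_imp,
    forall_eq, LinearMap.sub_apply, sub_eq_zero] at hxK
  obtain ⟨h01, h12, h03, h14, h25, h35⟩ := hxK
  have hx' := eq_sum_dualWedge_smul_basisBivector hx2
  rw [sum_ltPairs_fin_six] at hx'
  have hdecomp : x =
      dualWedge R 0 1 x • (basisBivector R 0 1 + basisBivector R 3 4) +
      dualWedge R 1 2 x • (basisBivector R 1 2 + basisBivector R 4 5) +
      ∑ q ∈ k2PerpPairs, dualWedge R q.1 q.2 x • basisBivector R q.1 q.2 := by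
    conv_lhs => rw [hx']
    rw [← h01, ← h12, h03, h14, h25, h35]
    simp [k2PerpPairs]
    module
  rw [hdecomp]
  refine add_mem (add_mem (Submodule.smul_mem _ _ (basisBivector_add_mem_k2PerpDecomposableSpan
    (a := 0) (by simp))) (Submodule.smul_mem _ _ (basisBivector_add_mem_k2PerpDecomposableSpan
    (a := 1) (by simp)))) (Submodule.sum_mem _ fun q hq => Submodule.smul_mem _ _ ?_)
  exact basisBivector_mem_k2PerpDecomposableSpan hq

lemma dualPiece_two_mem_span_k2Generators (A : (Fin 6 → R) [⋀^Fin 2]→ₗ[R] R)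
    (hA : ∀ w ∈ k2PerpDecomposableSpan R, dualPiece 2 A w = 0) :
    dualPiece 2 A ∈ Submodule.span R (k2Generators R) := by
  have hval (a b : Fin 6) :
      A ![Pi.single a 1, Pi.single b 1] = dualPiece 2 A (basisBivector R a b) :=
    (dualPiece_two_ι_mul_ι A _ _).symm
  have hfree : ∀ q ∈ k2PerpPairs, A ![Pi.single q.1 1, Pi.single q.2 1] = 0 := fun q hq => by
    rw [hval]
    exact hA _ (basisBivector_mem_k2PerpDecomposableSpan hq)
  simp only [k2PerpPairs, Finset.mem_insert, Finset.mem_singleton, forall_eq_or_imp,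
    forall_eq] at hfree
  obtain ⟨h02, h04, h05, h13, h15, h23, h24⟩ := hfree
  have hsum (a b c d : Fin 6)
      (h : basisBivector R a b + basisBivector R c d ∈ k2PerpDecomposableSpan R) :
      A ![Pi.single c 1, Pi.single d 1] = -A ![Pi.single a 1, Pi.single b 1] := by
    rw [eq_neg_iff_add_eq_zero, add_comm, hval, hval, ← map_add]
    exact hA _ h
  have h34 := hsum 0 1 3 4 (basisBivector_add_mem_k2PerpDecomposableSpan (a := 0) (by simp))
  have h45 := hsum 1 2 4 5 (basisBivector_add_mem_k2PerpDecomposableSpan (a := 1) (by simp))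
  have hdecomp : dualPiece 2 A =
      A ![Pi.single 0 1, Pi.single 1 1] • (dualWedge R 0 1 - dualWedge R 3 4) +
      A ![Pi.single 1 1, Pi.single 2 1] • (dualWedge R 1 2 - dualWedge R 4 5) +
      A ![Pi.single 0 1, Pi.single 3 1] • dualWedge R 0 3 +
      A ![Pi.single 1 1, Pi.single 4 1] • dualWedge R 1 4 +
      A ![Pi.single 2 1, Pi.single 5 1] • dualWedge R 2 5 +
      A ![Pi.single 3 1, Pi.single 5 1] • dualWedge R 3 5 := by
    rw [dualPiece_two_eq_sum, sum_ltPairs_fin_six, h02, h04, h05, h13, h15, h23, h24, h34, h45]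
    module
  rw [hdecomp]
  refine add_mem (add_mem (add_mem (add_mem (add_mem ?_ ?_) ?_) ?_) ?_) ?_ <;>
    exact Submodule.smul_mem _ _ (Submodule.subset_span (by simp [k2Generators]))

lemma span_dualPiece_inf_dualAnnihilator_k2Perp :
    Submodule.span R {φ | ∃ A : (Fin 6 → R) [⋀^Fin 2]→ₗ[R] R, φ = dualPiece 2 A} ⊓
      (k2Perp R).dualAnnihilator = Submodule.span R (k2Generators R) := by
  rw [span_dualPiece_eq_range]
  refine le_antisymm ?_ (Submodule.span_le.2 fun g hg => ⟨?_, ?_⟩)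
  · rintro _ ⟨⟨A, rfl⟩, hA⟩
    rw [SetLike.mem_coe, ← k2PerpDecomposableSpan_eq_k2Perp, Submodule.mem_dualAnnihilator] at hA
    exact dualPiece_two_mem_span_k2Generators A hA
  · have hmem (a b : Fin 6) : dualWedge R a b ∈ LinearMap.range (dualPieceₗ 2) := ⟨_, rfl⟩
    simp only [k2Generators, Set.mem_insert_iff, Set.mem_singleton_iff] at hg
    rcases hg with rfl | rfl | rfl | rfl | rfl | rfl
    · exact sub_mem (hmem _ _) (hmem _ _)
    · exact sub_mem (hmem _ _) (hmem _ _)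
    all_goals exact hmem _ _
  · exact (Submodule.mem_dualAnnihilator _).2 fun x hx => (mem_k2Perp.1 hx).2 g hg

end K2

theorem stmt12 (p : ℕ)
    (K2 : Submodule (ZMod p) (Module.Dual (ZMod p)
      (ExteriorAlgebra (ZMod p) (Fin 6 → ZMod p))))
    (hK2 : K2 = Submodule.span (ZMod p)
      {dw2 p 0 1 - dw2 p 3 4, dw2 p 1 2 - dw2 p 4 5,
        dw2 p 0 3, dw2 p 1 4, dw2 p 2 5, dw2 p 3 5})
    (S2 : Submodule (ZMod p) (ExteriorAlgebra (ZMod p) (Fin 6 → ZMod p)))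
    (hS2 : S2 = ⋀[ZMod p]^2 (Fin 6 → ZMod p) ⊓ K2.dualCoannihilator)
    (S2dec : Submodule (ZMod p) (ExteriorAlgebra (ZMod p) (Fin 6 → ZMod p)))
    (hS2dec : S2dec = Submodule.span (ZMod p)
      {x | x ∈ S2 ∧ ∃ u v : Fin 6 → ZMod p, x = ι (ZMod p) u * ι (ZMod p) v}) :
    S2dec = S2 ∧
    (Submodule.span (ZMod p)
        {φ | ∃ A : (Fin 6 → ZMod p) [⋀^Fin 2]→ₗ[ZMod p] ZMod p, φ = dualPiece 2 A}
      ⊓ S2dec.dualAnnihilator) = K2 := by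
  subst hK2 hS2 hS2dec
  have hdec : k2PerpDecomposableSpan (ZMod p) = k2Perp (ZMod p) :=
    k2PerpDecomposableSpan_eq_k2Perp
  refine ⟨hdec, ?_⟩
  change _ ⊓ (k2PerpDecomposableSpan (ZMod p)).dualAnnihilator =
    Submodule.span _ (k2Generators _)
  rw [hdec]
  exact span_dualPiece_inf_dualAnnihilator_k2Perp
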